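/- arXiv:1201.5471 — 3 statements merged into one kernel-verified Lean document; each statement's English description precedes it below -/
import Mathlib

section
/- Let Y be a real Banach space, F ⊆ Y and A ⊆ Y* bounded sets. If the set of restrictions A|_{cl_{w*}(F)} (where cl_{w*}(F) is the weak* closure of F in Y**) is relatively countably compact in C(cl_{w*}(F)) with the topology of pointwise convergence, then for all sequences (y_n) in F and (y*_m) in A for which all the involved iterated limits exist, lim_m lim_n y*_m(y_n) = lim_n lim_m y*_m(y_n). -/
/-!
Pick a weak* cluster point `ψ ∈ K` of the embedded sequence `(y n)` (Banach–Alaoglu makes `K`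
compact) and a pointwise cluster point `g ∈ C(K)` of the restrictions of `(ys m)`. Evaluation
at `ψ` gives `ψ (ys m) = a m` and `g ψ = L₁`, evaluation at `y n` gives `g (y n) = b n`, and
continuity of `g` at `ψ` then gives `g ψ = L₂`.
-/

open Filter Topology Metric Bornology

noncomputable section

variable {X : Type*} [NormedAddCommGroup X] [NormedSpace ℝ X]

/-- Topology of pointwise convergence on a set `D` of functionals. -/
def ptwTop (D : Set (X →L[ℝ] ℝ)) : TopologicalSpace X :=
  TopologicalSpace.induced (fun x (d : D) => (d : X →L[ℝ] ℝ) x) Pi.topologicalSpace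

/-- Weak-star topology on the dual of `X`. -/
def wstarTop (X : Type*) [NormedAddCommGroup X] [NormedSpace ℝ X] :
    TopologicalSpace (X →L[ℝ] ℝ) :=
  TopologicalSpace.induced (fun f (x : X) => f x) Pi.topologicalSpace

/-- Weak-star closure of a set of functionals. -/
def wstarClosure (A : Set (X →L[ℝ] ℝ)) : Set (X →L[ℝ] ℝ) :=
  @closure _ (wstarTop X) A

/-- Weak topology on `X`. -/
def weakTop (X : Type*) [NormedAddCommGroup X] [NormedSpace ℝ X] :
    TopologicalSpace X :=
  TopologicalSpace.induced (fun x (f : X →L[ℝ] ℝ) => f x) Pi.topologicalSpace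

/-- `aco_∞(A)`: absolutely convex series combinations of elements of `A`. -/
def acoInf (A : Set X) : Set X :=
  {x | ∃ (α : ℕ → ℝ) (u : ℕ → X), (∀ n, u n ∈ A) ∧ Summable (fun n => |α n|) ∧
    (∑' n, |α n|) = 1 ∧ HasSum (fun n => α n • u n) x}

/-- absolutely convex hull -/
def aco (A : Set X) : Set X := convexHull ℝ (A ∪ -A)

/-- subspace topology -/
def subTop {α : Type*} (t : TopologicalSpace α) (s : Set α) : TopologicalSpace s :=
  TopologicalSpace.induced (Subtype.val : s → α) t

theorem MapClusterPt.eq_of_tendsto {ι Z : Type*} [TopologicalSpace Z] [T2Space Z] {l : Filter ι}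
    {u : ι → Z} {c L : Z} (hc : MapClusterPt c l u) (hL : Tendsto u l (𝓝 L)) : c = L :=
  eq_of_nhds_neBot (hc.clusterPt.mono hL)

theorem eq_of_tendsto_iterated_of_mapClusterPt {ι κ T Z : Type*} [TopologicalSpace T]
    [TopologicalSpace Z] [T2Space Z] {l : Filter ι} {l' : Filter κ}
    {x : ι → T} {p : T} (hx : MapClusterPt p l x)
    {f : κ → T → Z} (hf : ∀ m, ContinuousAt (f m) p)
    {g : T → Z} (hg : ContinuousAt g p) (hfg : MapClusterPt g l' f)
    {a : κ → Z} {b : ι → Z} {L₁ L₂ : Z}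
    (ha : ∀ m, Tendsto (fun n => f m (x n)) l (𝓝 (a m))) (haL : Tendsto a l' (𝓝 L₁))
    (hb : ∀ n, Tendsto (fun m => f m (x n)) l' (𝓝 (b n))) (hbL : Tendsto b l (𝓝 L₂)) :
    L₁ = L₂ := by
  have hfg_at (t : T) : MapClusterPt (g t) l' (fun m => f m t) :=
    hfg.continuousAt_comp (continuous_apply t).continuousAt
  have hfp : (fun m => f m p) = a :=
    funext fun m => (hx.continuousAt_comp (hf m)).eq_of_tendsto (ha m)
  have hgx : g ∘ x = b := funext fun n => (hfg_at (x n)).eq_of_tendsto (hb n)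
  calc L₁ = g p := ((hfp ▸ hfg_at p).eq_of_tendsto haL).symm
    _ = L₂ := (hgx ▸ hx.continuousAt_comp hg).eq_of_tendsto hbL

theorem NormedSpace.isCompact_closure_inclusionInDoubleDual_image {𝕜 E : Type*} [RCLike 𝕜]
    [SeminormedAddCommGroup E] [NormedSpace 𝕜 E] {F : Set E} (hF : IsBounded F) :
    IsCompact (closure (inclusionInDoubleDual 𝕜 E '' F : Set (WeakDual 𝕜 (StrongDual 𝕜 E)))) :=
  WeakDual.isCompact_of_bounded_of_closed
    (WeakDual.isBounded_closure ((inclusionInDoubleDualLi 𝕜).lipschitz.isBounded_image hF))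
    isClosed_closure

theorem stmt0_general {Y : Type*} [NormedAddCommGroup Y] [NormedSpace ℝ Y]
    (F : Set Y) (A : Set (Y →L[ℝ] ℝ))
    (hF : IsBounded F)
    (K : Set ((Y →L[ℝ] ℝ) →L[ℝ] ℝ))
    (hK : K = @closure _ (wstarTop (Y →L[ℝ] ℝ)) ((NormedSpace.inclusionInDoubleDual ℝ Y) '' F))
    -- relative countable compactness of `A|_K` in `(C(K), τ_p)`:
    (hcc : ∀ a : ℕ → (Y →L[ℝ] ℝ), (∀ m, a m ∈ A) →
      ∃ g : K → ℝ, @Continuous _ _ (subTop (wstarTop (Y →L[ℝ] ℝ)) K) _ g ∧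
        MapClusterPt g atTop (fun m => fun φ : K => (φ : (Y →L[ℝ] ℝ) →L[ℝ] ℝ) (a m))) :
    ∀ (y : ℕ → Y) (ys : ℕ → (Y →L[ℝ] ℝ)), (∀ n, y n ∈ F) → (∀ m, ys m ∈ A) →
      ∀ (a b : ℕ → ℝ) (L₁ L₂ : ℝ),
        (∀ m, Tendsto (fun n => ys m (y n)) atTop (𝓝 (a m))) →
        Tendsto a atTop (𝓝 L₁) →
        (∀ n, Tendsto (fun m => ys m (y n)) atTop (𝓝 (b n))) →
        Tendsto b atTop (𝓝 L₂) →
        L₁ = L₂ := by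
  intro y ys hy hys a b L₁ L₂ ha haL hb hbL
  -- the weak* topology on the bidual, whose subspace topology on `K` is the one of `hcc`
  let _ : TopologicalSpace (StrongDual ℝ (StrongDual ℝ Y)) := wstarTop (StrongDual ℝ Y)
  let J := NormedSpace.inclusionInDoubleDual ℝ Y
  have : CompactSpace K := isCompact_iff_compactSpace.mp <| by
    subst hK; exact NormedSpace.isCompact_closure_inclusionInDoubleDual_image hF
  have hyK (n : ℕ) : J (y n) ∈ K := hK ▸ subset_closure (Set.mem_image_of_mem J (hy n))
  obtain ⟨ψ, hψ⟩ := exists_clusterPt_of_compactSpace (map (fun n => (⟨J (y n), hyK n⟩ : K)) atTop)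
  obtain ⟨g, hg, hgcl⟩ := hcc ys hys
  exact eq_of_tendsto_iterated_of_mapClusterPt (f := fun m (φ : K) => φ.1 (ys m)) hψ
    (fun m => ((WeakDual.eval_continuous (ys m)).comp continuous_subtype_val).continuousAt)
    hg.continuousAt hgcl ha haL hb hbL

/-- Grothendieck's double limit criterion (easy direction):
if the restrictions of `A` to the weak* closure of `F` in the bidual form a relatively
countably compact subset of `C(cl_w*(F))` with the pointwise topology, then the
double limit interchange holds for sequences from `F` and `A`. -/
theorem stmt0 {Y : Type*} [NormedAddCommGroup Y] [NormedSpace ℝ Y] [CompleteSpace Y]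
    (F : Set Y) (A : Set (Y →L[ℝ] ℝ))
    (hF : IsBounded F) (hA : IsBounded A)
    (K : Set ((Y →L[ℝ] ℝ) →L[ℝ] ℝ))
    (hK : K = @closure _ (wstarTop (Y →L[ℝ] ℝ)) ((NormedSpace.inclusionInDoubleDual ℝ Y) '' F))
    -- relative countable compactness of `A|_K` in `(C(K), τ_p)`:
    (hcc : ∀ a : ℕ → (Y →L[ℝ] ℝ), (∀ m, a m ∈ A) →
      ∃ g : K → ℝ, @Continuous _ _ (subTop (wstarTop (Y →L[ℝ] ℝ)) K) _ g ∧
        MapClusterPt g atTop (fun m => fun φ : K => (φ : (Y →L[ℝ] ℝ) →L[ℝ] ℝ) (a m))) :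
    ∀ (y : ℕ → Y) (ys : ℕ → (Y →L[ℝ] ℝ)), (∀ n, y n ∈ F) → (∀ m, ys m ∈ A) →
      ∀ (a b : ℕ → ℝ) (L₁ L₂ : ℝ),
        (∀ m, Tendsto (fun n => ys m (y n)) atTop (𝓝 (a m))) →
        Tendsto a atTop (𝓝 L₁) →
        (∀ n, Tendsto (fun m => ys m (y n)) atTop (𝓝 (b n))) →
        Tendsto b atTop (𝓝 L₂) →
        L₁ = L₂ :=
  stmt0_general F A hF K hK hcc
end
end

section
/- Every bounded linear functional on a Banach space X attains its norm on the unit ball B(X) if and only if B(X) is a boundary for X* (as a subset of B(X**)); in this case, if additionally B(X*) is compact in the topology of pointwise convergence on B(X), then one may conclude via the boundary theorem that B(X*) is weakly compact, i.e. X is reflexive. -/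
/-! Since every functional attains its norm on `B(X)`, the canonical image of `B(X)` in `B(X**)` is
a boundary for `X*`. Pointwise convergence on this boundary is coarser than the weak* topology, so
`B(X*)` is compact for it by Banach–Alaoglu; and `B(X*)` is weak* closed, hence weakly closed. The
boundary theorem then makes `B(X*)` weakly compact. -/

open Filter Topology Metric Bornology

noncomputable section

variable {X : Type*} [NormedAddCommGroup X] [NormedSpace ℝ X]

open NormedSpace

theorem IsCompact.of_le_topology {α : Type*} {t₁ t₂ : TopologicalSpace α} (h : t₁ ≤ t₂)
    {s : Set α} (hs : @IsCompact α t₁ s) : @IsCompact α t₂ s := by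
  simpa using @IsCompact.image α α t₁ t₂ s id hs (continuous_id_of_le h)

theorem wstarTop_isCompact_closedBall (r : ℝ) :
    @IsCompact _ (wstarTop X) (closedBall (0 : X →L[ℝ] ℝ) r) :=
  WeakDual.isCompact_closedBall 0 r

theorem wstarTop_isClosed_closedBall (r : ℝ) :
    @IsClosed _ (wstarTop X) (closedBall (0 : X →L[ℝ] ℝ) r) :=
  WeakDual.isClosed_closedBall 0 r

theorem weakTop_le_wstarTop : weakTop (X →L[ℝ] ℝ) ≤ wstarTop X := by
  have h : Continuous fun (φ : ((X →L[ℝ] ℝ) →L[ℝ] ℝ) → ℝ) (x : X) =>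
      φ (inclusionInDoubleDual ℝ X x) :=
    continuous_pi fun x => continuous_apply _
  exact (induced_mono (continuous_iff_le_induced.1 h)).trans_eq induced_compose

theorem wstarTop_le_ptwTop_image_inclusionInDoubleDual (S : Set X) :
    wstarTop X ≤ ptwTop (inclusionInDoubleDual ℝ X '' S) := by
  let := wstarTop X
  rw [ptwTop, ← continuous_iff_le_induced]
  refine continuous_pi ?_
  rintro ⟨_, x, -, rfl⟩
  exact (continuous_apply x).comp continuous_induced_dom

theorem image_inclusionInDoubleDual_closedBall_subset :
    inclusionInDoubleDual ℝ X '' closedBall 0 1 ⊆ closedBall (0 : (X →L[ℝ] ℝ) →L[ℝ] ℝ) 1 := by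
  rintro _ ⟨x, hx, rfl⟩
  rw [mem_closedBall_zero_iff] at hx
  exact (dist_zero_right (inclusionInDoubleDual ℝ X x)).trans_le
    ((double_dual_bound ℝ X x).trans hx)

theorem weakTop_isClosed_closedBall (r : ℝ) :
    @IsClosed _ (weakTop (X →L[ℝ] ℝ)) (closedBall (0 : X →L[ℝ] ℝ) r) :=
  (wstarTop_isClosed_closedBall r).mono weakTop_le_wstarTop

theorem ptwTop_image_inclusionInDoubleDual_isCompact_closedBall (S : Set X) (r : ℝ) :
    @IsCompact _ (ptwTop (inclusionInDoubleDual ℝ X '' S)) (closedBall (0 : X →L[ℝ] ℝ) r) :=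
  (wstarTop_isCompact_closedBall r).of_le_topology
    (wstarTop_le_ptwTop_image_inclusionInDoubleDual S)

theorem stmt14_general {X : Type*} [NormedAddCommGroup X] [NormedSpace ℝ X]
    -- every functional attains its norm on `B(X)`:
    (hatt : ∀ f : X →L[ℝ] ℝ, ∃ x ∈ Metric.closedBall (0 : X) 1, f x = ‖f‖)
    -- the boundary theorem applied to the Banach space `X*`:
    (hboundary : ∀ B : Set ((X →L[ℝ] ℝ) →L[ℝ] ℝ), B ⊆ Metric.closedBall 0 1 →
      (∀ f : X →L[ℝ] ℝ, ∃ b ∈ B, b f = ‖f‖) →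
      ∀ A : Set (X →L[ℝ] ℝ), IsBounded A →
        @IsClosed _ (weakTop (X →L[ℝ] ℝ)) A →
        @IsCompact _ (ptwTop B) A →
        @IsCompact _ (weakTop (X →L[ℝ] ℝ)) A) :
    @IsCompact _ (weakTop (X →L[ℝ] ℝ)) (Metric.closedBall (0 : X →L[ℝ] ℝ) 1) := by
  have hB : ∀ f : X →L[ℝ] ℝ, ∃ b ∈ inclusionInDoubleDual ℝ X '' closedBall 0 1, b f = ‖f‖ := by
    intro f
    obtain ⟨x, hx, hfx⟩ := hatt f
    exact ⟨_, Set.mem_image_of_mem _ hx, hfx⟩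
  exact hboundary _ image_inclusionInDoubleDual_closedBall_subset hB _ isBounded_closedBall
    (weakTop_isClosed_closedBall 1) (ptwTop_image_inclusionInDoubleDual_isCompact_closedBall _ 1)

/-- if every `x* ∈ X*` attains its norm on `B(X)` (equivalently, the
canonical image of `B(X)` in `B(X**)` is a boundary for `X*`), then — assuming the
boundary theorem for the space `X*` — the dual unit ball `B(X*)` is weakly
compact (i.e. `X` is reflexive). -/
theorem stmt14 {X : Type*} [NormedAddCommGroup X] [NormedSpace ℝ X] [CompleteSpace X]
    -- every functional attains its norm on `B(X)`:
    (hatt : ∀ f : X →L[ℝ] ℝ, ∃ x ∈ Metric.closedBall (0 : X) 1, f x = ‖f‖)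
    -- the boundary theorem applied to the Banach space `X*`:
    (hboundary : ∀ B : Set ((X →L[ℝ] ℝ) →L[ℝ] ℝ), B ⊆ Metric.closedBall 0 1 →
      (∀ f : X →L[ℝ] ℝ, ∃ b ∈ B, b f = ‖f‖) →
      ∀ A : Set (X →L[ℝ] ℝ), IsBounded A →
        @IsClosed _ (weakTop (X →L[ℝ] ℝ)) A →
        @IsCompact _ (ptwTop B) A →
        @IsCompact _ (weakTop (X →L[ℝ] ℝ)) A) :
    @IsCompact _ (weakTop (X →L[ℝ] ℝ)) (Metric.closedBall (0 : X →L[ℝ] ℝ) 1) :=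
  stmt14_general hatt hboundary
end
end

section
/- Let K be a compact Hausdorff space. Then C(K) with the topology τ_p of pointwise convergence on K is angelic: every relatively countably compact subset A of (C(K), τ_p) is relatively compact, and every point in the τ_p-closure of such a set A is the τ_p-limit of a sequence from A. -/
open Filter Topology

noncomputable section

/-- `C(K)` as a type: continuous real functions on `K`. -/
def Cp (K : Type*) [TopologicalSpace K] : Type _ := {g : K → ℝ // Continuous g}

/-- `C(K)` equipped with the topology `τ_p` of pointwise convergence. -/
instance (K : Type*) [TopologicalSpace K] : TopologicalSpace (Cp K) :=
  TopologicalSpace.induced (fun h : Cp K => h.1) Pi.topologicalSpace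

/-!
Both halves rest on sequences `fₙ ∈ A` and points `xₙ ∈ K` chosen alternately, each step
depending on all earlier choices. If `h` is a τ_p-cluster point of `(fₙ)`, `x*` a cluster point of
`(xₙ)` in the compact `K`, and `f_j xₙ → f_j x` for every `j`, then `h x* = h x`.

Grothendieck: if a pointwise limit `g` of `A` jumps by `ε` at `x₀`, pick `xₙ` near `x₀` for
`f₀, …, f_{n-1}` with `|g xₙ - g x₀| ≥ ε`, and `fₙ` close to `g` at `x₀` and at `x 0, …, x n`.
Then `h x* = h x₀ = g x₀`, while `h x*` is a limit of `h xₙ = g xₙ`. So the closure of `A` consists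
of continuous functions; as `A` is pointwise bounded it is compact.

For `g` in the closure, let `Tₙ` be a finite `1/(n+1)`-net of `K` for `g, f₀, …, f_{n-1}` and `fₙ`
close to `g` on `T₀ ∪ … ∪ Tₙ`. A cluster point `h` of `(fₙ)` equals `g` on the nets, hence
everywhere by the argument above, so `fₙ → g` inside the compact closure.
-/

open Bornology Metric

theorem exists_seq_pair_of_forall_finset_exists {α β : Type*} [DecidableEq α] [DecidableEq β]
    {Q : ℕ → Finset α → β → Prop} {P : ℕ → Finset β → α → Prop}
    (hQ : ∀ n s, ∃ b, Q n s b) (hP : ∀ n t, ∃ a, P n t a) :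
    ∃ (a : ℕ → α) (b : ℕ → β), ∀ n,
      Q n ((Finset.range n).image a) (b n) ∧ P n ((Finset.range (n + 1)).image b) (a n) := by
  choose b' hb' using hQ
  choose a' ha' using hP
  let st : ℕ → Finset α × Finset β := fun n => Nat.rec (∅, ∅)
    (fun n st => (insert (a' n (insert (b' n st.1) st.2)) st.1, insert (b' n st.1) st.2)) n
  let b n := b' n (st n).1
  let a n := a' n (insert (b n) (st n).2)
  have hst : ∀ n, (st n).1 = (Finset.range n).image a ∧ (st n).2 = (Finset.range n).image b := by
    intro n
    induction n with
    | zero => exact ⟨rfl, rfl⟩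
    | succ n ih =>
      rw [Finset.range_add_one, Finset.image_insert, Finset.image_insert, ← ih.1, ← ih.2]
      exact ⟨rfl, rfl⟩
  refine ⟨a, b, fun n => ⟨?_, ?_⟩⟩
  · rw [← (hst n).1]; exact hb' n _
  · rw [Finset.range_add_one, Finset.image_insert, ← (hst n).2]; exact ha' n _

theorem exists_finset_forall_exists_dist_lt {X E : Type*} [TopologicalSpace X] [CompactSpace X]
    [PseudoMetricSpace E] {Φ : X → E} (hΦ : Continuous Φ) {δ : ℝ} (hδ : 0 < δ) :
    ∃ T : Finset X, ∀ x, ∃ y ∈ T, dist (Φ x) (Φ y) < δ := by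
  obtain ⟨T, -, hT⟩ := isCompact_univ.elim_nhds_subcover (fun y => Φ ⁻¹' ball (Φ y) δ)
    fun y _ => hΦ.continuousAt.preimage_mem_nhds (ball_mem_nhds _ hδ)
  refine ⟨T, fun x => ?_⟩
  obtain ⟨y, hy, hxy⟩ := Set.mem_iUnion₂.1 (hT (Set.mem_univ x))
  exact ⟨y, hy, hxy⟩

theorem exists_mem_forall_dist_lt_of_mem_closure {X E : Type*} [PseudoMetricSpace E]
    {B : Set (X → E)} {g : X → E} (hg : g ∈ closure B) (S : Finset X) {δ : ℝ} (hδ : 0 < δ) :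
    ∃ f ∈ B, ∀ y ∈ S, dist (f y) (g y) < δ := by
  have hnear : ∀ᶠ f in 𝓝 g, ∀ y ∈ S, dist (f y) (g y) < δ := S.eventually_all.2 fun y _ =>
    (continuous_apply y).continuousAt.eventually (ball_mem_nhds (g y) hδ)
  exact ((mem_closure_iff_frequently.1 hg).and_eventually hnear).exists

theorem MapClusterPt.eq_of_tendsto_s19 {X α : Type*} [TopologicalSpace X] [T2Space X]
    {F : Filter α} {u : α → X} {a b : X} (hc : MapClusterPt a F u) (hl : Tendsto u F (𝓝 b)) :
    a = b :=
  eq_of_nhds_neBot (hc.neBot.mono (inf_le_inf_left _ hl))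

theorem tendsto_of_eventually_dist_lt_one_div {E : Type*} [PseudoMetricSpace E] {u : ℕ → E}
    {c : E} (h : ∀ᶠ n in atTop, dist (u n) c < 1 / (n + 1)) : Tendsto u atTop (𝓝 c) :=
  tendsto_iff_dist_tendsto_zero.2 <| squeeze_zero' (.of_forall fun _ => dist_nonneg)
    (h.mono fun _ hn => hn.le) tendsto_one_div_add_atTop_nhds_zero_nat

def IsRelCountablyCompact {X : Type*} [TopologicalSpace X] (A : Set X) : Prop :=
  ∀ u : ℕ → X, (∀ n, u n ∈ A) → ∃ x, MapClusterPt x atTop u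

theorem IsRelCountablyCompact.image {X Y : Type*} [TopologicalSpace X] [TopologicalSpace Y]
    {A : Set X} (hA : IsRelCountablyCompact A) {φ : X → Y} (hφ : Continuous φ) :
    IsRelCountablyCompact (φ '' A) := by
  intro u hu
  choose v hvA hvu using hu
  obtain ⟨x, hx⟩ := hA v hvA
  refine ⟨φ x, ?_⟩
  rw [← funext hvu]
  exact hx.continuousAt_comp hφ.continuousAt

theorem IsRelCountablyCompact.isBounded {E : Type*} [PseudoMetricSpace E] {B : Set E}
    (hB : IsRelCountablyCompact B) : IsBounded B := by
  by_contra hunb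
  obtain ⟨c, -⟩ : B.Nonempty := Set.nonempty_iff_ne_empty.2 fun h => hunb (h ▸ isBounded_empty)
  have : ∀ n : ℕ, ∃ b ∈ B, (n : ℝ) < dist b c := by
    intro n
    by_contra! hn
    exact hunb ((isBounded_iff_subset_closedBall c).2 ⟨n, fun b hb => mem_closedBall.2 (hn b hb)⟩)
  choose u huB hu using this
  obtain ⟨p, hp⟩ := hB u huB
  have hcob : Tendsto u atTop (cobounded E) := (tendsto_dist_right_atTop_iff c).1
    (tendsto_atTop_mono (fun n => (hu n).le) tendsto_natCast_atTop_atTop)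
  exact hp.neBot.ne (disjoint_iff.1 ((disjoint_nhds_cobounded p).mono_right hcob))

namespace Cp

variable {K : Type*} [TopologicalSpace K]

theorem isEmbedding_val : IsEmbedding (fun f : Cp K => f.1) := ⟨⟨rfl⟩, Subtype.val_injective⟩

theorem continuous_eval (x : K) : Continuous fun f : Cp K => f.1 x :=
  (continuous_apply x).comp isEmbedding_val.continuous

theorem ext {f g : Cp K} (h : ∀ x, f.1 x = g.1 x) : f = g := Subtype.ext (funext h)

theorem mapClusterPt_eval {α : Type*} {F : Filter α} {u : α → Cp K} {h : Cp K}
    (hh : MapClusterPt h F u) (x : K) : MapClusterPt (h.1 x) F fun n => (u n).1 x :=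
  hh.continuousAt_comp (continuous_eval x).continuousAt

theorem eval_eq_eval_of_mapClusterPt {α : Type*} {F : Filter α} {u : α → Cp K} {h : Cp K}
    (hh : MapClusterPt h F u) {y : ℕ → K} {x' x : K} (hx' : MapClusterPt x' atTop y)
    (hy : ∀ j, Tendsto (fun n => (u j).1 (y n)) atTop (𝓝 ((u j).1 x))) : h.1 x' = h.1 x :=
  (isClosed_eq (continuous_eval x') (continuous_eval x)).mem_of_mapClusterPt hh <|
    .of_forall fun j => (hx'.continuousAt_comp (u j).2.continuousAt).eq_of_tendsto_s19 (hy j)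

variable [CompactSpace K]

theorem continuous_of_mem_closure {A : Set (Cp K)} (hA : IsRelCountablyCompact A) {g : K → ℝ}
    (hg : g ∈ closure ((fun f : Cp K => f.1) '' A)) : Continuous g := by
  classical
  rw [continuous_iff_continuousAt]
  intro x₀
  by_contra hx₀
  obtain ⟨ε, hε, hfar⟩ : ∃ ε > 0, ∃ᶠ y in 𝓝 x₀, ε ≤ dist (g y) (g x₀) := by
    simpa [ContinuousAt, Metric.tendsto_nhds] using hx₀
  have hpoint : ∀ (n : ℕ) (s : Finset (Cp K)), ∃ y,
      ε ≤ dist (g y) (g x₀) ∧ ∀ φ ∈ s, dist (φ.1 y) (φ.1 x₀) < 1 / (n + 1) := fun n s =>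
    (hfar.and_eventually (s.eventually_all.2 fun φ _ =>
      φ.2.continuousAt.eventually (ball_mem_nhds _ Nat.one_div_pos_of_nat))).exists
  have hfun : ∀ (n : ℕ) (t : Finset K), ∃ f : Cp K,
      f ∈ A ∧ ∀ y ∈ insert x₀ t, dist (f.1 y) (g y) < 1 / (n + 1) := by
    intro n t
    obtain ⟨_, ⟨f, hf, rfl⟩, hfg⟩ :=
      exists_mem_forall_dist_lt_of_mem_closure hg (insert x₀ t) Nat.one_div_pos_of_nat
    exact ⟨f, hf, hfg⟩
  obtain ⟨f, x, hfx⟩ := exists_seq_pair_of_forall_finset_exists hpoint hfun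
  have hfA (n : ℕ) : f n ∈ A := (hfx n).2.1
  have hx_far (n : ℕ) : ε ≤ dist (g (x n)) (g x₀) := (hfx n).1.1
  have hf_x (j : ℕ) : Tendsto (fun n => (f j).1 (x n)) atTop (𝓝 ((f j).1 x₀)) :=
    tendsto_of_eventually_dist_lt_one_div <| (eventually_gt_atTop j).mono fun n hn =>
      (hfx n).1.2 _ (Finset.mem_image_of_mem f (Finset.mem_range.2 hn))
  have hf_x₀ : Tendsto (fun n => (f n).1 x₀) atTop (𝓝 (g x₀)) :=
    tendsto_of_eventually_dist_lt_one_div <| .of_forall fun n =>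
      (hfx n).2.2 x₀ (Finset.mem_insert_self _ _)
  have hf_xj (j : ℕ) : Tendsto (fun n => (f n).1 (x j)) atTop (𝓝 (g (x j))) :=
    tendsto_of_eventually_dist_lt_one_div <| (eventually_ge_atTop j).mono fun n hn =>
      (hfx n).2.2 _ (Finset.mem_insert_of_mem
        (Finset.mem_image_of_mem x (Finset.mem_range.2 (Nat.lt_succ_of_le hn))))
  obtain ⟨h, hh⟩ := hA f hfA
  obtain ⟨xs, hxs⟩ : ∃ xs, MapClusterPt xs atTop x := exists_clusterPt_of_compactSpace _
  have hxs_x₀ : h.1 xs = h.1 x₀ := eval_eq_eval_of_mapClusterPt hh hxs hf_x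
  have hx₀ : h.1 x₀ = g x₀ := (mapClusterPt_eval hh x₀).eq_of_tendsto_s19 hf_x₀
  have hx_eq (n : ℕ) : h.1 (x n) = g (x n) := (mapClusterPt_eval hh (x n)).eq_of_tendsto_s19 (hf_xj n)
  have hxs_far : ε ≤ dist (h.1 xs) (g x₀) :=
    (isClosed_le continuous_const (continuous_id.dist continuous_const)).mem_of_mapClusterPt
      (hxs.continuousAt_comp h.2.continuousAt) (.of_forall fun n =>
        show ε ≤ dist (h.1 (x n)) (g x₀) from (hx_eq n).symm ▸ hx_far n)
  rw [hxs_x₀, hx₀, dist_self] at hxs_far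
  exact hε.not_ge hxs_far

theorem isCompact_closure {A : Set (Cp K)} (hA : IsRelCountablyCompact A) :
    IsCompact (closure A) := by
  have hbdd (x : K) : IsBounded ((fun f : Cp K => f.1 x) '' A) :=
    (hA.image (continuous_eval x)).isBounded
  have hsub : closure ((fun f : Cp K => f.1) '' A) ⊆
      Set.univ.pi fun x => closure ((fun f : Cp K => f.1 x) '' A) :=
    closure_minimal (fun _ ⟨f, hf, hfe⟩ x _ => subset_closure ⟨f, hf, hfe ▸ rfl⟩)
      (isClosed_set_pi fun _ _ => isClosed_closure)
  rw [isEmbedding_val.closure_eq_preimage_closure_image]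
  exact isEmbedding_val.isInducing.isCompact_preimage'
    ((isCompact_univ_pi fun x => (hbdd x).isCompact_closure).of_isClosed_subset
      isClosed_closure hsub)
    fun g hg => ⟨⟨g, continuous_of_mem_closure hA hg⟩, rfl⟩

theorem exists_seq_tendsto_of_mem_closure {A : Set (Cp K)} (hA : IsRelCountablyCompact A)
    {g : Cp K} (hg : g ∈ closure A) : ∃ u : ℕ → Cp K, (∀ n, u n ∈ A) ∧ Tendsto u atTop (𝓝 g) := by
  classical
  have hnet : ∀ (n : ℕ) (s : Finset (Cp K)), ∃ T : Finset K, ∀ x, ∃ y ∈ T,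
      ∀ φ ∈ insert g s, dist (φ.1 x) (φ.1 y) < 1 / (n + 1) := by
    intro n s
    obtain ⟨T, hT⟩ := exists_finset_forall_exists_dist_lt
      (Φ := fun x (φ : ↥(insert g s)) => φ.1.1 x) (continuous_pi fun φ => φ.1.2)
      Nat.one_div_pos_of_nat
    exact ⟨T, fun x => (hT x).imp fun y ⟨hy, hxy⟩ =>
      ⟨hy, fun φ hφ => (dist_pi_lt_iff Nat.one_div_pos_of_nat).1 hxy ⟨φ, hφ⟩⟩⟩
  have hfun : ∀ (n : ℕ) (t : Finset (Finset K)), ∃ f : Cp K,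
      f ∈ A ∧ ∀ y ∈ t.biUnion id, dist (f.1 y) (g.1 y) < 1 / (n + 1) := by
    intro n t
    obtain ⟨_, ⟨f, hf, rfl⟩, hfg⟩ := exists_mem_forall_dist_lt_of_mem_closure
      (mem_closure_image isEmbedding_val.continuous.continuousAt hg) _ Nat.one_div_pos_of_nat
    exact ⟨f, hf, hfg⟩
  obtain ⟨f, T, hfT⟩ := exists_seq_pair_of_forall_finset_exists hnet hfun
  have hfA (n : ℕ) : f n ∈ A := (hfT n).2.1
  refine ⟨f, hfA, (isCompact_closure hA).tendsto_nhds_of_unique_mapClusterPt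
    (.of_forall fun n => subset_closure (hfA n)) fun h _ hh => ext fun x => ?_⟩
  choose y hyT hy using fun n => (hfT n).1 x
  have hg_y : Tendsto (fun n => g.1 (y n)) atTop (𝓝 (g.1 x)) :=
    tendsto_of_eventually_dist_lt_one_div <| .of_forall fun n =>
      dist_comm (g.1 x) _ ▸ hy n g (Finset.mem_insert_self _ _)
  have hf_y (j : ℕ) : Tendsto (fun n => (f j).1 (y n)) atTop (𝓝 ((f j).1 x)) :=
    tendsto_of_eventually_dist_lt_one_div <| (eventually_gt_atTop j).mono fun n hn =>
      dist_comm ((f j).1 x) _ ▸ hy n (f j) (Finset.mem_insert_of_mem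
        (Finset.mem_image_of_mem f (Finset.mem_range.2 hn)))
  have hf_yj (j : ℕ) : Tendsto (fun n => (f n).1 (y j)) atTop (𝓝 (g.1 (y j))) :=
    tendsto_of_eventually_dist_lt_one_div <| (eventually_ge_atTop j).mono fun n hn =>
      (hfT n).2.2 _ (Finset.mem_biUnion.2 ⟨T j,
        Finset.mem_image_of_mem T (Finset.mem_range.2 (Nat.lt_succ_of_le hn)), hyT j⟩)
  obtain ⟨ys, hys⟩ : ∃ ys, MapClusterPt ys atTop y := exists_clusterPt_of_compactSpace _
  have hys_x : h.1 ys = h.1 x := eval_eq_eval_of_mapClusterPt hh hys hf_y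
  have hys_g : h.1 ys = g.1 x := (hys.continuousAt_comp h.2.continuousAt).eq_of_tendsto_s19
    (hg_y.congr fun n => ((mapClusterPt_eval hh (y n)).eq_of_tendsto_s19 (hf_yj n)).symm)
  rw [← hys_x, hys_g]

end Cp

theorem stmt19_general (K : Type*) [TopologicalSpace K] [CompactSpace K]
    (A : Set (Cp K))
    -- `A` is relatively countably compact in `(C(K), τ_p)`:
    (hcc : ∀ u : ℕ → Cp K, (∀ n, u n ∈ A) → ∃ h : Cp K, MapClusterPt h atTop u) :
    -- `A` is relatively compact ...
    IsCompact (closure A) ∧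
    -- ... and the closure of `A` is its sequential closure:
    ∀ g ∈ closure A, ∃ u : ℕ → Cp K, (∀ n, u n ∈ A) ∧ Tendsto u atTop (𝓝 g) :=
  ⟨Cp.isCompact_closure hcc, fun _ hg => Cp.exists_seq_tendsto_of_mem_closure hcc hg⟩

/-- angelicity of `(C(K), τ_p)` for compact `K`: every relatively
countably compact subset `A` of `(C(K), τ_p)` is relatively compact, and every
point of its closure is the `τ_p`-limit of a sequence from `A`. -/
theorem stmt19 (K : Type*) [TopologicalSpace K] [CompactSpace K] [T2Space K]
    (A : Set (Cp K))
    -- `A` is relatively countably compact in `(C(K), τ_p)`: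
    (hcc : ∀ u : ℕ → Cp K, (∀ n, u n ∈ A) → ∃ h : Cp K, MapClusterPt h atTop u) :
    -- `A` is relatively compact ...
    IsCompact (closure A) ∧
    -- ... and the closure of `A` is its sequential closure:
    ∀ g ∈ closure A, ∃ u : ℕ → Cp K, (∀ n, u n ∈ A) ∧ Tendsto u atTop (𝓝 g) :=
  stmt19_general K A hcc
end
end
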